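/- (BMO × BMO → BMO paraproduct estimate.) For all dyadic test functions f, g ∈ S one has ‖π_hh(f,g)‖_{BMO} ≤ C‖f‖_{BMO}‖g‖_{BMO} with an absolute constant C. -/

import Mathlib

/-!
The paraproduct is `π_hh(f,g) = Σ_P u_P χ_{I_P}/|I_P|` with `u_P = Wf(P)·Wg(P)`. Fix a tree with
top `Q`. For `Q' ≤ Q`, every `χ_{I_P}` with `P ≰ Q` is constant on `I_{Q'}` (dyadic intervals are
nested or disjoint), so it is orthogonal to `φ_{Q'}`. Hence on the tree `π_hh(f,g)` has the same
Haar coefficients as `F = Σ_{P ≤ Q} u_P χ_{I_P}/|I_P|`, and by Bessel's inequality the tree sum is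
at most `‖F‖₂²`. Expanding `‖F‖₂²`, only nested pairs `P' ≤ P` contribute, each with weight
`1/|I_P|`. By AM–GM the pairs contribute at most `Σ Wf(P)² Wg(P')² / |I_P|` (and the same with the
roles swapped). The Carleson packing bound `Σ_{P' ≤ P} Wg(P')² ≤ ‖g‖²_BMO |I_P|`, applied to the
inner sum and then to the outer one, gives `‖F‖₂² ≤ 2 ‖f‖²_BMO ‖g‖²_BMO |I_Q|`, so `C = √2`.
-/

open MeasureTheory Set

noncomputable section

namespace Dyadic

/-- A dyadic interval/lacunary tile: `I = [j·2^k, (j+1)·2^k)` with `-M ≤ k ≤ M`,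
`I ⊆ [0, 2^M)`.  Lacunary tiles are in bijection with dyadic intervals, so we
identify the tile `P⁺(I) = I × [1/|I|, 2/|I|)` with the data of `I`. -/
structure Tile (M : ℕ) where
  j : ℤ
  k : ℤ
  hk_lb : -(M : ℤ) ≤ k
  hk_ub : k ≤ (M : ℤ)
  hj : 0 ≤ j
  hsub : ((j : ℝ) + 1) * 2 ^ k ≤ 2 ^ (M : ℤ)

variable {M : ℕ}

/-- The side length `|I_P| = 2^k` of the spatial interval of the tile. -/
def Tile.len (P : Tile M) : ℝ := 2 ^ P.k

/-- The spatial interval `I_P` of the tile. -/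
def Tile.ival (P : Tile M) : Set ℝ :=
  Ico ((P.j : ℝ) * 2 ^ P.k) (((P.j : ℝ) + 1) * 2 ^ P.k)

/-- The order `P ≤′ Q` on lacunary tiles: `I_P ⊆ I_Q`. -/
def Tile.le (P Q : Tile M) : Prop := P.ival ⊆ Q.ival

/-- A (lacunary) tree: a collection of tiles together with a top tile. -/
structure Tree (M : ℕ) where
  tiles : Set (Tile M)
  top : Tile M
  top_mem : top ∈ tiles
  le_top : ∀ P ∈ tiles, P.le top

/-- `|I_T|`, the length of the spatial interval of the top of the tree. -/
def Tree.len (T : Tree M) : ℝ := T.top.len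

/-- A collection of tiles is convex if `P₁ ≤′ P ≤′ P₂` with `P₁, P₂` in the
collection implies `P` is in the collection. -/
def IsConvex (PP : Set (Tile M)) : Prop :=
  ∀ P₁ ∈ PP, ∀ P₂ ∈ PP, ∀ P : Tile M, P₁.le P → P.le P₂ → P ∈ PP

/-- The size `‖a‖_{size(T)} = (1/|I_T|) Σ_{P ∈ T} a(P)` of `a` on a tree `T`. -/
def treeSize (a : Tile M → ℝ) (T : Tree M) : ℝ :=
  (∑ᶠ P ∈ T.tiles, a P) / T.len

/-- The maximal size `‖a‖_{size*(PP)}`: the supremum of `‖a‖_{size(T)}` over all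
convex trees `T ⊆ PP` (by convention `0` if there are none). -/
def maxSize (a : Tile M → ℝ) (PP : Set (Tile M)) : ℝ :=
  sSup (insert 0 {s : ℝ | ∃ T : Tree M, T.tiles ⊆ PP ∧ IsConvex T.tiles ∧ s = treeSize a T})

/-- The complete tree `Tree(P) = {Q : Q ≤′ P}`. -/
def cTree (P : Tile M) : Set (Tile M) := {Q : Tile M | Q.le P}

/-- A tree `T` is complete with respect to `PP` if `T = Tree(P_T) ∩ PP`. -/
def Tree.IsCompleteIn (T : Tree M) (PP : Set (Tile M)) : Prop :=
  T.tiles = cTree T.top ∩ PP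

/-- `QQ` is an `α`-packing of the tree `T`: `QQ ⊆ T` and `Σ_{P ∈ QQ} |I_P| ≤ α|I_T|`. -/
def IsPacking (α : ℝ) (QQ : Set (Tile M)) (T : Tree M) : Prop :=
  QQ ⊆ T.tiles ∧ (∑ᶠ P ∈ QQ, Tile.len P) ≤ α * T.len

/-- `QQ` is a uniform `α`-packing of the tree `T`:
`Σ_{P ∈ QQ, I_P ⊆ J} |I_P| ≤ α|J|` for every dyadic interval `J`. -/
def IsUniformPacking (α : ℝ) (QQ : Set (Tile M)) (T : Tree M) : Prop :=
  QQ ⊆ T.tiles ∧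
    ∀ J : Tile M, (∑ᶠ P ∈ {P ∈ QQ | P.ival ⊆ J.ival}, Tile.len P) ≤ α * J.len

/-- Left half of the spatial interval. -/
def Tile.left (P : Tile M) : Set ℝ :=
  Ico ((P.j : ℝ) * 2 ^ P.k) (((P.j : ℝ) + 1 / 2) * 2 ^ P.k)

/-- Right half of the spatial interval. -/
def Tile.right (P : Tile M) : Set ℝ :=
  Ico (((P.j : ℝ) + 1 / 2) * 2 ^ P.k) (((P.j : ℝ) + 1) * 2 ^ P.k)

/-- The (mother) Haar wavelet `φ_P = |I_P|^{-1/2}(χ_{I_l} - χ_{I_r})`. -/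
def Tile.haar (P : Tile M) : ℝ → ℝ := fun x =>
  (Real.sqrt P.len)⁻¹ * (P.left.indicator 1 x - P.right.indicator 1 x)

/-- The Haar (wavelet) coefficient `Wf(P) = ⟨f, φ_P⟩`. -/
def waveCoeff (f : ℝ → ℝ) (P : Tile M) : ℝ := ∫ x, f x * P.haar x

/-- The average `[f]_{I_P} = (1/|I_P|)∫_{I_P} f`. -/
def tileAvg (f : ℝ → ℝ) (P : Tile M) : ℝ := (∫ x in P.ival, f x) / P.len

/-- The mean `‖f‖_{mean(P)} = (1/|I_P|)∫_{I_P} |f|`. -/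
def tileMean (f : ℝ → ℝ) (P : Tile M) : ℝ := (∫ x in P.ival, |f x|) / P.len

/-- The maximal mean `‖f‖_{mean*(PP)} = sup_{P ∈ PP} ‖f‖_{mean(P)}`. -/
def maxMean (f : ℝ → ℝ) (PP : Set (Tile M)) : ℝ :=
  sSup (insert 0 (tileMean f '' PP))

/-- The dyadic BMO norm `‖f‖_{BMO} = ‖|Wf|²‖_{size*(PP⁺)}^{1/2}`. -/
def bmoNorm (M : ℕ) (f : ℝ → ℝ) : ℝ :=
  Real.sqrt (maxSize (fun P : Tile M => waveCoeff f P ^ 2) univ)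

/-- The grid interval `[j·2^{-M}, (j+1)·2^{-M})` at the finest scale. -/
def gridIval (M : ℕ) (j : ℤ) : Set ℝ :=
  Ico ((j : ℝ) * 2 ^ (-(M : ℤ))) (((j : ℝ) + 1) * 2 ^ (-(M : ℤ)))

/-- A dyadic test function: supported on `[0, 2^M)` and constant on every dyadic
interval of length `2^{-M}`. -/
def IsTestFun (M : ℕ) (f : ℝ → ℝ) : Prop :=
  (∀ x : ℝ, x ∉ Ico (0 : ℝ) (2 ^ (M : ℤ)) → f x = 0) ∧
    ∀ j : ℤ, ∀ x ∈ gridIval M j, ∀ y ∈ gridIval M j, f x = f y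

/-- The `L²` norm. -/
def l2Norm (f : ℝ → ℝ) : ℝ := Real.sqrt (∫ x, f x ^ 2)

/-- The `L^∞` norm (as a supremum of values; adequate for test functions). -/
def supNorm (f : ℝ → ℝ) : ℝ := ⨆ x : ℝ, |f x|

/-- The weak `L^r` quasinorm `sup_{λ>0} λ |{|h| ≥ λ}|^{1/r}`. -/
def weakNorm (r : ℝ) (h : ℝ → ℝ) : ℝ :=
  sSup {s : ℝ | ∃ l : ℝ, 0 < l ∧ s = l * (volume {x : ℝ | l ≤ |h x|}).toReal ^ (1 / r)}

/-- The phase space projection `Π_T f = Σ_{P ∈ T} ⟨f, φ_P⟩ φ_P` onto a tree. -/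
def treeProj (T : Tree M) (f : ℝ → ℝ) : ℝ → ℝ := fun x =>
  ∑ᶠ P ∈ T.tiles, waveCoeff f P * P.haar x

/-- The high-low paraproduct `π_hl(f,g) = Σ_P Wf(P) [g]_P φ_P`. -/
def paraHL (M : ℕ) (f g : ℝ → ℝ) : ℝ → ℝ := fun x =>
  ∑ᶠ P : Tile M, waveCoeff f P * tileAvg g P * P.haar x

/-- The low-high paraproduct `π_lh(f,g) = Σ_P [f]_P Wg(P) φ_P`. -/
def paraLH (M : ℕ) (f g : ℝ → ℝ) : ℝ → ℝ := fun x =>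
  ∑ᶠ P : Tile M, tileAvg f P * waveCoeff g P * P.haar x

/-- The high-high paraproduct `π_hh(f,g) = Σ_P Wf(P) Wg(P) χ_{I_P}/|I_P|`. -/
def paraHH (M : ℕ) (f g : ℝ → ℝ) : ℝ → ℝ := fun x =>
  ∑ᶠ P : Tile M, waveCoeff f P * waveCoeff g P * P.ival.indicator 1 x / P.len

/-- The constant function `1` on `[0, 2^M)`. -/
def oneFn (M : ℕ) : ℝ → ℝ := (Ico (0 : ℝ) (2 ^ (M : ℤ))).indicator 1

/-- A perfect dyadic Calderón–Zygmund operator, recorded via its kernel `K` and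
kernel constant `A₀`. -/
structure PDCZ (M : ℕ) where
  K : ℝ → ℝ → ℝ
  A₀ : ℝ
  hA₀ : 0 < A₀
  meas : Measurable (Function.uncurry K)
  bound : ∀ x y : ℝ, x ≠ y → |K x y| ≤ A₀ / |x - y|
  perfectX : ∀ I J : Tile M, Disjoint I.ival J.ival →
    ∀ x ∈ I.ival, ∀ x' ∈ I.ival, ∀ y ∈ J.ival, K x y = K x' y
  perfectY : ∀ I J : Tile M, Disjoint I.ival J.ival →
    ∀ x ∈ I.ival, ∀ x' ∈ I.ival, ∀ y ∈ J.ival, K y x = K y x'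
  diag : ∀ I : Tile M, I.k = -(M : ℤ) → ∀ x ∈ I.ival, ∀ y ∈ I.ival, K x y = 0
  corner₁ : ∀ x ∈ Ico (0 : ℝ) (2 ^ ((M : ℤ) - 1)),
    ∀ y ∈ Ico ((2 : ℝ) ^ ((M : ℤ) - 1)) (2 ^ (M : ℤ)), K x y = 0
  corner₂ : ∀ x ∈ Ico ((2 : ℝ) ^ ((M : ℤ) - 1)) (2 ^ (M : ℤ)),
    ∀ y ∈ Ico (0 : ℝ) (2 ^ ((M : ℤ) - 1)), K x y = 0

/-- `Tf(x) = ∫ K(x,y) f(y) dy`. -/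
def PDCZ.app (Op : PDCZ M) (f : ℝ → ℝ) : ℝ → ℝ := fun x => ∫ y, Op.K x y * f y

/-- The transpose `T*f(x) = ∫ K(y,x) f(y) dy`. -/
def PDCZ.appT (Op : PDCZ M) (f : ℝ → ℝ) : ℝ → ℝ := fun x => ∫ y, Op.K y x * f y

/-- Complex-valued Haar coefficient. -/
def waveCoeffC (b : ℝ → ℂ) (P : Tile M) : ℂ := ∫ x, b x * (P.haar x : ℂ)

/-- Complex-valued average. -/
def tileAvgC (b : ℝ → ℂ) (P : Tile M) : ℂ := (∫ x in P.ival, b x) / (P.len : ℂ)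

/-- BMO norm of a complex-valued function. -/
def bmoNormC (M : ℕ) (b : ℝ → ℂ) : ℝ :=
  Real.sqrt (maxSize (fun P : Tile M => ‖waveCoeffC b P‖ ^ 2) univ)

/-- Complex-valued dyadic test functions. -/
def IsTestFunC (M : ℕ) (b : ℝ → ℂ) : Prop :=
  (∀ x : ℝ, x ∉ Ico (0 : ℝ) (2 ^ (M : ℤ)) → b x = 0) ∧
    ∀ j : ℤ, ∀ x ∈ gridIval M j, ∀ y ∈ gridIval M j, b x = b y

/-- The operator applied to a complex-valued function. -/
def PDCZ.appC (Op : PDCZ M) (b : ℝ → ℂ) : ℝ → ℂ := fun x => ∫ y, (Op.K x y : ℂ) * b y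

end Dyadic

open scoped ENNReal InnerProductSpace

theorem MeasureTheory.sum_sq_integral_mul_le_integral_sq {α ι : Type*} [MeasurableSpace α]
    {μ : Measure α} {φ : ι → α → ℝ} (hφ : ∀ i, MemLp (φ i) 2 μ)
    (hnorm : ∀ i, ∫ x, φ i x * φ i x ∂μ = 1)
    (horth : Pairwise fun i j => ∫ x, φ i x * φ j x ∂μ = 0)
    {F : α → ℝ} (hF : MemLp F 2 μ) (s : Finset ι) :
    ∑ i ∈ s, (∫ x, F x * φ i x ∂μ) ^ 2 ≤ ∫ x, F x ^ 2 ∂μ := by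
  classical
  have inner_toLp : ∀ {g h : α → ℝ} (hg : MemLp g 2 μ) (hh : MemLp h 2 μ),
      ⟪hg.toLp g, hh.toLp h⟫_ℝ = ∫ x, g x * h x ∂μ := fun hg hh => by
    rw [L2.inner_def]
    refine integral_congr_ae ?_
    filter_upwards [hg.coeFn_toLp, hh.coeFn_toLp] with x hgx hhx
    rw [hgx, hhx, real_inner_eq_re_inner, RCLike.inner_apply]
    simp [mul_comm]
  have hv : Orthonormal ℝ fun i => (hφ i).toLp (φ i) := by
    refine orthonormal_iff_ite.2 fun i j => ?_
    rw [inner_toLp]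
    split_ifs with hij
    · subst hij; exact hnorm i
    · exact horth hij
  calc ∑ i ∈ s, (∫ x, F x * φ i x ∂μ) ^ 2
      = ∑ i ∈ s, ‖⟪(hφ i).toLp (φ i), hF.toLp F⟫_ℝ‖ ^ 2 := by
        simp only [inner_toLp, Real.norm_eq_abs, sq_abs, mul_comm]
    _ ≤ ‖hF.toLp F‖ ^ 2 := hv.sum_inner_products_le _
    _ = ∫ x, F x ^ 2 ∂μ := by
        rw [← real_inner_self_eq_norm_sq, inner_toLp]
        simp only [sq]

namespace Dyadic

variable {M : ℕ}

def dyadicIco (j k : ℤ) : Set ℝ := Ico (j * 2 ^ k) ((j + 1) * 2 ^ k)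

lemma mem_dyadicIco {x : ℝ} {j k : ℤ} : x ∈ dyadicIco j k ↔ ⌊x / 2 ^ k⌋ = j := by
  have h : (0 : ℝ) < 2 ^ k := zpow_pos two_pos k
  rw [dyadicIco, mem_Ico, Int.floor_eq_iff, le_div_iff₀ h, div_lt_iff₀ h]

lemma floor_div_two_zpow_of_le {k k' : ℤ} (h : k ≤ k') (x : ℝ) :
    ⌊x / 2 ^ k'⌋ = ⌊x / 2 ^ k⌋ / (2 ^ (k' - k).toNat : ℕ) := by
  rw [← Int.floor_div_natCast, div_div]
  congr 2
  push_cast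
  rw [← zpow_natCast, ← zpow_add₀ two_ne_zero]
  congr 1
  omega

lemma dyadicIco_subset_or_disjoint {j k j' k' : ℤ} (h : k ≤ k') :
    dyadicIco j k ⊆ dyadicIco j' k' ∨ Disjoint (dyadicIco j k) (dyadicIco j' k') := by
  by_cases hj : j / (2 ^ (k' - k).toNat : ℕ) = j'
  · refine Or.inl fun x hx => ?_
    rw [mem_dyadicIco] at hx ⊢
    rw [floor_div_two_zpow_of_le h, hx, hj]
  · refine Or.inr (disjoint_left.2 fun x hx hx' => hj ?_)
    rw [mem_dyadicIco] at hx hx'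
    rw [← hx, ← floor_div_two_zpow_of_le h, hx']

lemma Tile.ext {P Q : Tile M} (hj : P.j = Q.j) (hk : P.k = Q.k) : P = Q := by
  cases P; cases Q; simp_all

lemma Tile.ival_eq_dyadicIco (P : Tile M) : P.ival = dyadicIco P.j P.k := rfl

lemma Tile.len_pos (P : Tile M) : 0 < P.len := zpow_pos two_pos _

lemma Tree.len_pos (T : Tree M) : 0 < T.len := T.top.len_pos

lemma Tile.measurableSet_ival (P : Tile M) : MeasurableSet P.ival := measurableSet_Ico

lemma Tile.volume_real_ival (P : Tile M) : volume.real P.ival = P.len := by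
  have h := P.len_pos
  rw [Tile.len] at h
  rw [Tile.ival, Real.volume_real_Ico_of_le (by nlinarith), Tile.len]
  ring

lemma Tile.left_eq_dyadicIco (P : Tile M) : P.left = dyadicIco (2 * P.j) (P.k - 1) := by
  rw [Tile.left, dyadicIco, zpow_sub_one₀ two_ne_zero]
  push_cast
  congr 1 <;> ring

lemma Tile.right_eq_dyadicIco (P : Tile M) : P.right = dyadicIco (2 * P.j + 1) (P.k - 1) := by
  rw [Tile.right, dyadicIco, zpow_sub_one₀ two_ne_zero]
  push_cast
  congr 1 <;> ring

lemma Tile.left_union_right (P : Tile M) : P.left ∪ P.right = P.ival := by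
  have h := P.len_pos
  rw [Tile.len] at h
  exact Ico_union_Ico_eq_Ico (by nlinarith) (by nlinarith)

lemma Tile.disjoint_left_right (P : Tile M) : Disjoint P.left P.right := Ico_disjoint_Ico_same

lemma Tile.eq_of_k_eq_of_mem {P Q : Tile M} (hk : P.k = Q.k) {x : ℝ} (hP : x ∈ P.ival)
    (hQ : x ∈ Q.ival) : P = Q := by
  rw [Tile.ival_eq_dyadicIco, mem_dyadicIco] at hP hQ
  exact Tile.ext (by rw [← hP, ← hQ, hk]) hk

lemma Tile.ival_nonempty (P : Tile M) : P.ival.Nonempty :=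
  ⟨P.j * 2 ^ P.k, by
    rw [Tile.ival_eq_dyadicIco, mem_dyadicIco, mul_div_cancel_right₀ _ (zpow_ne_zero _ two_ne_zero),
      Int.floor_intCast]⟩

lemma Tile.k_le_of_le {P Q : Tile M} (h : P.le Q) : P.k ≤ Q.k := by
  have hlen : P.len ≤ Q.len := by
    rw [← P.volume_real_ival, ← Q.volume_real_ival]
    exact measureReal_mono h (by rw [Tile.ival]; exact measure_Ico_lt_top.ne)
  exact (zpow_le_zpow_iff_right₀ one_lt_two).1 hlen

lemma Tile.le_antisymm {P Q : Tile M} (hPQ : P.le Q) (hQP : Q.le P) : P = Q := by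
  obtain ⟨x, hx⟩ := P.ival_nonempty
  exact Tile.eq_of_k_eq_of_mem ((Tile.k_le_of_le hPQ).antisymm (Tile.k_le_of_le hQP)) hx (hPQ hx)

lemma Tile.le_or_le_or_disjoint (P Q : Tile M) :
    P.le Q ∨ Q.le P ∨ Disjoint P.ival Q.ival := by
  rcases le_total P.k Q.k with h | h
  · exact (dyadicIco_subset_or_disjoint h).imp_right Or.inr
  · exact (dyadicIco_subset_or_disjoint h).elim (Or.inr ∘ Or.inl)
      fun hd => Or.inr (Or.inr hd.symm)

lemma Tile.subset_left_or_subset_right {P Q : Tile M} (h : P.le Q) (hne : P ≠ Q) :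
    P.ival ⊆ Q.left ∨ P.ival ⊆ Q.right := by
  obtain ⟨x, hx⟩ := P.ival_nonempty
  have hk : P.k ≤ Q.k - 1 := by
    have := (Tile.k_le_of_le h).lt_of_ne fun hk => hne (Tile.eq_of_k_eq_of_mem hk hx (h hx))
    omega
  rw [Tile.left_eq_dyadicIco, Tile.right_eq_dyadicIco]
  rcases dyadicIco_subset_or_disjoint (j := P.j) (j' := 2 * Q.j) hk with hl | hl
  · exact Or.inl hl
  refine Or.inr ((dyadicIco_subset_or_disjoint hk).resolve_right fun hr => ?_)
  have hxQ : x ∈ Q.left ∪ Q.right := Q.left_union_right ▸ h hx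
  rw [Tile.left_eq_dyadicIco, Tile.right_eq_dyadicIco] at hxQ
  exact hxQ.elim (disjoint_left.1 hl hx) (disjoint_left.1 hr hx)

lemma Tile.j_le (P : Tile M) : P.j ≤ 4 ^ M := by
  have hk : (2 : ℝ) ^ (-(M : ℤ)) ≤ 2 ^ P.k := zpow_le_zpow_right₀ one_le_two P.hk_lb
  have h4 : (4 : ℝ) ^ M = 2 ^ (M : ℤ) / 2 ^ (-(M : ℤ)) := by
    rw [zpow_neg, div_inv_eq_mul, zpow_natCast, ← mul_pow]
    norm_num
  have hj : (0 : ℝ) ≤ P.j := by exact_mod_cast P.hj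
  have : (P.j : ℝ) ≤ 4 ^ M := by
    rw [h4, le_div_iff₀ (zpow_pos two_pos _)]
    nlinarith [P.hsub, zpow_pos (two_pos (α := ℝ)) P.k]
  exact_mod_cast this

instance : Finite (Tile M) :=
  Finite.of_injective
    (fun P : Tile M => (⟨(P.j, P.k), Finset.mem_product.2
      ⟨Finset.mem_Icc.2 ⟨P.hj, P.j_le⟩, Finset.mem_Icc.2 ⟨P.hk_lb, P.hk_ub⟩⟩⟩ :
        (Finset.Icc 0 (4 ^ M) ×ˢ Finset.Icc (-(M : ℤ)) M : Finset (ℤ × ℤ))))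
    fun P Q h => by
      simp only [Subtype.mk.injEq, Prod.mk.injEq] at h
      exact Tile.ext h.1 h.2

noncomputable instance : Fintype (Tile M) := Fintype.ofFinite _

instance : Finite (Tree M) :=
  Finite.of_injective (fun T : Tree M => (T.tiles, T.top)) fun T T' h => by
    cases T; cases T'
    simp only [Prod.mk.injEq] at h
    obtain ⟨rfl, rfl⟩ := h
    rfl

lemma Tile.haar_of_notMem (P : Tile M) {x : ℝ} (hx : x ∉ P.ival) : P.haar x = 0 := by
  rw [← P.left_union_right, mem_union, not_or] at hx
  simp [Tile.haar, hx.1, hx.2]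

lemma Tile.haar_of_mem_left (P : Tile M) {x : ℝ} (hx : x ∈ P.left) :
    P.haar x = (√P.len)⁻¹ := by
  simp [Tile.haar, hx, disjoint_left.1 P.disjoint_left_right hx]

lemma Tile.haar_of_mem_right (P : Tile M) {x : ℝ} (hx : x ∈ P.right) :
    P.haar x = -(√P.len)⁻¹ := by
  simp [Tile.haar, hx, disjoint_right.1 P.disjoint_left_right hx]

lemma memLp_indicator_one_Ico (p : ℝ≥0∞) (a b : ℝ) :
    MemLp ((Ico a b).indicator (1 : ℝ → ℝ)) p :=
  memLp_indicator_const p measurableSet_Ico 1 (Or.inr measure_Ico_lt_top.ne)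

lemma Tile.memLp_haar (P : Tile M) (p : ℝ≥0∞) : MemLp P.haar p :=
  ((memLp_indicator_one_Ico p _ _).sub (memLp_indicator_one_Ico p _ _)).const_mul _

lemma Tile.integrable_haar (P : Tile M) : Integrable P.haar :=
  memLp_one_iff_integrable.1 (P.memLp_haar 1)

lemma Tile.integral_haar (P : Tile M) : ∫ x, P.haar x = 0 := by
  have h := P.len_pos
  rw [Tile.len] at h
  simp only [Tile.haar, Tile.left, Tile.right]
  rw [integral_const_mul,
    integral_sub (memLp_one_iff_integrable.1 (memLp_indicator_one_Ico 1 _ _))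
      (memLp_one_iff_integrable.1 (memLp_indicator_one_Ico 1 _ _)),
    integral_indicator_one measurableSet_Ico, integral_indicator_one measurableSet_Ico,
    Real.volume_real_Ico_of_le (by nlinarith),
    Real.volume_real_Ico_of_le (by nlinarith)]
  ring

lemma Tile.integral_haar_mul_self (P : Tile M) : ∫ x, P.haar x * P.haar x = 1 := by
  have h : ∀ x, P.haar x * P.haar x = P.len⁻¹ * P.ival.indicator 1 x := fun x => by
    have hsq : √P.len ^ 2 = P.len := Real.sq_sqrt P.len_pos.le
    by_cases hx : x ∈ P.ival
    · rw [indicator_of_mem hx, Pi.one_apply, _root_.mul_one, ← hsq, ← inv_pow, sq]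
      rcases (P.left_union_right ▸ hx : x ∈ P.left ∪ P.right) with hx | hx
      · rw [P.haar_of_mem_left hx]
      · rw [P.haar_of_mem_right hx, neg_mul_neg]
    · simp [P.haar_of_notMem hx, hx]
  simp_rw [h]
  rw [integral_const_mul, integral_indicator_one P.measurableSet_ival,
    P.volume_real_ival, inv_mul_cancel₀ P.len_pos.ne']

lemma Tile.integral_mul_haar_eq_of_eq_add_const (Q : Tile M) {F G : ℝ → ℝ}
    (hG : Integrable fun x => G x * Q.haar x) (c : ℝ) (h : ∀ x ∈ Q.ival, F x = G x + c) :
    ∫ x, F x * Q.haar x = ∫ x, G x * Q.haar x := by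
  have hF : ∀ x, F x * Q.haar x = G x * Q.haar x + c * Q.haar x := fun x => by
    by_cases hx : x ∈ Q.ival
    · rw [h x hx, _root_.add_mul]
    · simp [Q.haar_of_notMem hx]
  simp_rw [hF]
  rw [integral_add hG (Q.integrable_haar.const_mul c), integral_const_mul, Q.integral_haar,
    mul_zero, add_zero]

lemma Tile.integral_mul_haar_eq_zero_of_const (Q : Tile M) {F : ℝ → ℝ} (c : ℝ)
    (h : ∀ x ∈ Q.ival, F x = c) : ∫ x, F x * Q.haar x = 0 := by
  rw [Q.integral_mul_haar_eq_of_eq_add_const (G := 0) (by simp) c (by simpa using h)]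
  simp

lemma Tile.exists_haar_const_of_not_le {P Q : Tile M} (h : ¬ P.le Q) :
    ∃ c, ∀ x ∈ Q.ival, P.haar x = c := by
  rcases P.le_or_le_or_disjoint Q with hPQ | hQP | hd
  · exact absurd hPQ h
  · rcases Tile.subset_left_or_subset_right hQP (by rintro rfl; exact h hQP) with hl | hr
    · exact ⟨_, fun x hx => P.haar_of_mem_left (hl hx)⟩
    · exact ⟨_, fun x hx => P.haar_of_mem_right (hr hx)⟩
  · exact ⟨0, fun x hx => P.haar_of_notMem (disjoint_right.1 hd hx)⟩

lemma Tile.integral_haar_mul_haar_of_ne {P Q : Tile M} (hne : P ≠ Q) :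
    ∫ x, P.haar x * Q.haar x = 0 := by
  by_cases hPQ : P.le Q
  · have hQP : ¬ Q.le P := fun hQP => hne (Tile.le_antisymm hPQ hQP)
    obtain ⟨c, hc⟩ := Tile.exists_haar_const_of_not_le hQP
    simp_rw [_root_.mul_comm (P.haar _)]
    exact P.integral_mul_haar_eq_zero_of_const c hc
  · obtain ⟨c, hc⟩ := Tile.exists_haar_const_of_not_le hPQ
    exact Q.integral_mul_haar_eq_zero_of_const c hc

lemma Tile.indicator_ival_eq_of_not_le {P Q : Tile M} (h : ¬ P.le Q) {x y : ℝ}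
    (hx : x ∈ Q.ival) (hy : y ∈ Q.ival) :
    P.ival.indicator (1 : ℝ → ℝ) x = P.ival.indicator 1 y := by
  rcases P.le_or_le_or_disjoint Q with hPQ | hQP | hd
  · exact absurd hPQ h
  · simp [indicator_of_mem (hQP hx), indicator_of_mem (hQP hy)]
  · rw [indicator_of_notMem (disjoint_right.1 hd hx),
      indicator_of_notMem (disjoint_right.1 hd hy)]

section MaxSize

variable (a : Tile M → ℝ) (PP : Set (Tile M))

lemma bddAbove_treeSizes : BddAbove (insert 0
    {s : ℝ | ∃ T : Tree M, T.tiles ⊆ PP ∧ IsConvex T.tiles ∧ s = treeSize a T}) :=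
  (((Set.finite_range (treeSize a)).subset (by rintro _ ⟨T, -, -, rfl⟩; exact ⟨T, rfl⟩)).insert
    0).bddAbove

lemma maxSize_nonneg : 0 ≤ maxSize a PP :=
  le_csSup (bddAbove_treeSizes a PP) (mem_insert 0 _)

lemma treeSize_le_maxSize {T : Tree M} (hT : T.tiles ⊆ PP) (hc : IsConvex T.tiles) :
    treeSize a T ≤ maxSize a PP :=
  le_csSup (bddAbove_treeSizes a PP) (mem_insert_of_mem _ ⟨T, hT, hc, rfl⟩)

lemma maxSize_le {c : ℝ} (hc : 0 ≤ c)
    (h : ∀ T : Tree M, T.tiles ⊆ PP → IsConvex T.tiles → treeSize a T ≤ c) :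
    maxSize a PP ≤ c :=
  csSup_le (insert_nonempty _ _) <| by
    rintro _ (rfl | ⟨T, hT, hcv, rfl⟩)
    exacts [hc, h T hT hcv]

end MaxSize

def Tile.below (Q : Tile M) : Finset (Tile M) := (cTree Q).toFinite.toFinset

lemma Tile.mem_below {P Q : Tile M} : P ∈ Q.below ↔ P.le Q := by
  rw [Tile.below, Set.Finite.mem_toFinset]
  rfl

def completeTree (Q : Tile M) : Tree M :=
  ⟨cTree Q, Q, (subset_rfl : Q.ival ⊆ Q.ival), fun _ hP => hP⟩

lemma isConvex_completeTree (Q : Tile M) : IsConvex (completeTree Q).tiles :=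
  fun _ _ _ hP₂ _ _ hP => Set.Subset.trans hP hP₂

lemma sum_below_le_maxSize (a : Tile M → ℝ) (Q : Tile M) :
    ∑ P ∈ Q.below, a P ≤ maxSize a univ * Q.len := by
  have h := treeSize_le_maxSize a univ (subset_univ _) (isConvex_completeTree Q)
  change (∑ᶠ P ∈ cTree Q, a P) / Q.len ≤ _ at h
  rwa [div_le_iff₀ Q.len_pos, finsum_mem_eq_finite_toFinset_sum] at h

lemma sum_below_sq_waveCoeff_le (f : ℝ → ℝ) (Q : Tile M) :
    ∑ P ∈ Q.below, waveCoeff f P ^ 2 ≤ bmoNorm M f ^ 2 * Q.len := by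
  rw [bmoNorm, Real.sq_sqrt (maxSize_nonneg _ _)]
  exact sum_below_le_maxSize _ Q

def avgSum (D : Finset (Tile M)) (u : Tile M → ℝ) (x : ℝ) : ℝ :=
  ∑ P ∈ D, u P * P.ival.indicator 1 x / P.len

lemma paraHH_eq_avgSum (f g : ℝ → ℝ) :
    paraHH M f g = avgSum (Finset.univ : Finset (Tile M)) fun P => waveCoeff f P * waveCoeff g P :=
  funext fun _ => finsum_eq_sum_of_fintype _

lemma memLp_avgSum (D : Finset (Tile M)) (u : Tile M → ℝ) (p : ℝ≥0∞) : MemLp (avgSum D u) p :=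
  memLp_finsetSum D fun P _ => by
    convert ((memLp_indicator_one_Ico p _ _).const_mul (u P)).mul_const P.len⁻¹ using 1
    funext x
    rw [div_eq_mul_inv]
    rfl

lemma waveCoeff_avgSum_univ_of_le {Q Q' : Tile M} (h : Q'.le Q) (u : Tile M → ℝ) :
    waveCoeff (avgSum Finset.univ u) Q' = waveCoeff (avgSum Q.below u) Q' := by
  classical
  obtain ⟨x₀, hx₀⟩ := Q'.ival_nonempty
  refine Q'.integral_mul_haar_eq_of_eq_add_const
    ((memLp_one_iff_integrable.1 (memLp_avgSum _ u 1)).mul_of_top_left (Q'.memLp_haar ⊤))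
    (avgSum (Finset.univ \ Q.below) u x₀) fun x hx => ?_
  rw [avgSum, avgSum, avgSum, ← Finset.sum_sdiff (Finset.subset_univ Q.below), _root_.add_comm]
  congr 1
  refine Finset.sum_congr rfl fun P hP => ?_
  have hPQ : ¬ P.le Q := fun hPQ => (Finset.mem_sdiff.1 hP).2 (Tile.mem_below.2 hPQ)
  rw [Tile.indicator_ival_eq_of_not_le hPQ (h hx) (h hx₀)]

def Tile.overlap (P P' : Tile M) : ℝ := volume.real (P.ival ∩ P'.ival) / (P.len * P'.len)

lemma Tile.overlap_comm (P P' : Tile M) : P.overlap P' = P'.overlap P := by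
  rw [Tile.overlap, Tile.overlap, inter_comm, _root_.mul_comm]

lemma Tile.overlap_nonneg (P P' : Tile M) : 0 ≤ P.overlap P' :=
  div_nonneg measureReal_nonneg (mul_pos P.len_pos P'.len_pos).le

lemma Tile.overlap_of_le {P P' : Tile M} (h : P.le P') : P.overlap P' = P'.len⁻¹ := by
  rw [Tile.overlap, inter_eq_left.2 h, P.volume_real_ival, div_mul_eq_div_div,
    div_self P.len_pos.ne', one_div]

open Classical in
lemma Tile.overlap_le (P P' : Tile M) :
    P.overlap P' ≤ (if P'.le P then P.len⁻¹ else 0) + (if P.le P' then P'.len⁻¹ else 0) := by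
  have h₁ : 0 ≤ if P'.le P then P.len⁻¹ else 0 := by split_ifs <;> simp [P.len_pos.le]
  have h₂ : 0 ≤ if P.le P' then P'.len⁻¹ else 0 := by split_ifs <;> simp [P'.len_pos.le]
  rcases P.le_or_le_or_disjoint P' with h | h | h
  · rw [Tile.overlap_of_le h, if_pos h]
    exact le_add_of_nonneg_left h₁
  · rw [Tile.overlap_comm, Tile.overlap_of_le h, if_pos h]
    exact le_add_of_nonneg_right h₂
  · rw [Tile.overlap, h.inter_eq, measureReal_empty, zero_div]
    positivity

lemma integral_avgSum_sq (D : Finset (Tile M)) (u : Tile M → ℝ) :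
    ∫ x, avgSum D u x ^ 2 = ∑ P ∈ D, ∑ P' ∈ D, u P * u P' * P.overlap P' := by
  have hsq : ∀ x, avgSum D u x ^ 2 = ∑ P ∈ D, ∑ P' ∈ D,
      u P * u P' / (P.len * P'.len) * (P.ival ∩ P'.ival).indicator 1 x := fun x => by
    rw [avgSum, sq, Finset.sum_mul_sum]
    refine Finset.sum_congr rfl fun P _ => Finset.sum_congr rfl fun P' _ => ?_
    rw [inter_indicator_one, Pi.mul_apply]
    ring
  have hint : ∀ P P' : Tile M, Integrable ((P.ival ∩ P'.ival).indicator (1 : ℝ → ℝ)) := by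
    intro P P'
    rw [Tile.ival, Tile.ival, Ico_inter_Ico]
    exact memLp_one_iff_integrable.1 (memLp_indicator_one_Ico 1 _ _)
  simp_rw [hsq]
  rw [integral_finsetSum _ fun P _ => integrable_finsetSum _ fun P' _ => (hint P P').const_mul _]
  refine Finset.sum_congr rfl fun P _ => ?_
  rw [integral_finsetSum _ fun P' _ => (hint P P').const_mul _]
  refine Finset.sum_congr rfl fun P' _ => ?_
  rw [integral_const_mul, integral_indicator_one (P.measurableSet_ival.inter P'.measurableSet_ival),
    Tile.overlap]
  ring

lemma sum_sum_mul_mul_overlap_le (D : Finset (Tile M)) (x y : Tile M → ℝ) :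
    ∑ P ∈ D, ∑ P' ∈ D, x P * y P * (x P' * y P') * P.overlap P'
      ≤ ∑ P ∈ D, ∑ P' ∈ D, x P ^ 2 * y P' ^ 2 * P.overlap P' := by
  have hswap : ∑ P ∈ D, ∑ P' ∈ D, x P' ^ 2 * y P ^ 2 * P.overlap P'
      = ∑ P ∈ D, ∑ P' ∈ D, x P ^ 2 * y P' ^ 2 * P.overlap P' := by
    rw [Finset.sum_comm]
    simp_rw [Tile.overlap_comm]
  calc ∑ P ∈ D, ∑ P' ∈ D, x P * y P * (x P' * y P') * P.overlap P'
      ≤ ∑ P ∈ D, ∑ P' ∈ D,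
          (x P ^ 2 * y P' ^ 2 + x P' ^ 2 * y P ^ 2) / 2 * P.overlap P' := by
        gcongr with P _ P' _
        · exact P.overlap_nonneg P'
        · nlinarith [two_mul_le_add_sq (x P * y P') (x P' * y P)]
    _ = ∑ P ∈ D, ∑ P' ∈ D, x P ^ 2 * y P' ^ 2 * P.overlap P' := by
        simp_rw [add_div, _root_.add_mul, div_mul_eq_mul_div, Finset.sum_add_distrib,
          ← Finset.sum_div, hswap]
        ring

open Classical in
lemma sum_sum_le_of_packing {b c : Tile M → ℝ} (hb : ∀ P, 0 ≤ b P) (hc : ∀ P, 0 ≤ c P)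
    {B : ℝ} (hB : ∀ P : Tile M, ∑ P' ∈ P.below, c P' ≤ B * P.len) (D : Finset (Tile M)) :
    ∑ P ∈ D, ∑ P' ∈ D, b P * c P' * (if P'.le P then P.len⁻¹ else 0) ≤ B * ∑ P ∈ D, b P := by
  rw [Finset.mul_sum]
  refine Finset.sum_le_sum fun P _ => ?_
  calc ∑ P' ∈ D, b P * c P' * (if P'.le P then P.len⁻¹ else 0)
      = b P * P.len⁻¹ * ∑ P' ∈ D with P'.le P, c P' := by
        rw [Finset.sum_filter, Finset.mul_sum]
        refine Finset.sum_congr rfl fun P' _ => ?_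
        split_ifs <;> ring
    _ ≤ b P * P.len⁻¹ * (B * P.len) := by
        gcongr
        · exact mul_nonneg (hb P) (inv_nonneg.2 P.len_pos.le)
        · refine (Finset.sum_le_sum_of_subset_of_nonneg (fun P' hP' => ?_)
            fun P' _ _ => hc P').trans (hB P)
          exact Tile.mem_below.2 (Finset.mem_filter.1 hP').2
    _ = B * b P := by field_simp [P.len_pos.ne']

lemma sum_sum_mul_overlap_le {b c : Tile M → ℝ} (hb : ∀ P, 0 ≤ b P) (hc : ∀ P, 0 ≤ c P)
    {A B : ℝ} (hA : ∀ P : Tile M, ∑ P' ∈ P.below, b P' ≤ A * P.len)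
    (hB : ∀ P : Tile M, ∑ P' ∈ P.below, c P' ≤ B * P.len) (Q : Tile M) :
    ∑ P ∈ Q.below, ∑ P' ∈ Q.below, b P * c P' * P.overlap P' ≤ 2 * (A * B) * Q.len := by
  classical
  have hA0 : 0 ≤ A := (mul_nonneg_iff_of_pos_right Q.len_pos).1
    ((Finset.sum_nonneg fun P _ => hb P).trans (hA Q))
  have hB0 : 0 ≤ B := (mul_nonneg_iff_of_pos_right Q.len_pos).1
    ((Finset.sum_nonneg fun P _ => hc P).trans (hB Q))
  calc ∑ P ∈ Q.below, ∑ P' ∈ Q.below, b P * c P' * P.overlap P'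
      ≤ ∑ P ∈ Q.below, ∑ P' ∈ Q.below, b P * c P' *
          ((if P'.le P then P.len⁻¹ else 0) + (if P.le P' then P'.len⁻¹ else 0)) := by
        gcongr with P _ P' _
        · exact mul_nonneg (hb P) (hc P')
        · exact P.overlap_le P'
    _ = ∑ P ∈ Q.below, ∑ P' ∈ Q.below, b P * c P' * (if P'.le P then P.len⁻¹ else 0)
        + ∑ P' ∈ Q.below, ∑ P ∈ Q.below, c P' * b P * (if P.le P' then P'.len⁻¹ else 0) := by
        rw [Finset.sum_comm (f := fun P' P => c P' * b P * _)]
        simp_rw [_root_.mul_add, Finset.sum_add_distrib, _root_.mul_comm (c _) (b _)]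
    _ ≤ B * ∑ P ∈ Q.below, b P + A * ∑ P ∈ Q.below, c P :=
        add_le_add (sum_sum_le_of_packing hb hc hB _) (sum_sum_le_of_packing hc hb hA _)
    _ ≤ B * (A * Q.len) + A * (B * Q.len) := by
        gcongr
        exacts [hA Q, hB Q]
    _ = 2 * (A * B) * Q.len := by ring

lemma sum_sq_waveCoeff_paraHH_le (f g : ℝ → ℝ) (T : Tree M) :
    ∑ᶠ Q ∈ T.tiles, waveCoeff (paraHH M f g) Q ^ 2
      ≤ 2 * (bmoNorm M f ^ 2 * bmoNorm M g ^ 2) * T.len := by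
  set u : Tile M → ℝ := fun P => waveCoeff f P * waveCoeff g P
  set F := avgSum T.top.below u
  rw [finsum_mem_eq_finite_toFinset_sum _ T.tiles.toFinite, paraHH_eq_avgSum]
  calc ∑ Q ∈ T.tiles.toFinite.toFinset, waveCoeff (avgSum Finset.univ u) Q ^ 2
      = ∑ Q ∈ T.tiles.toFinite.toFinset, (∫ x, F x * Q.haar x) ^ 2 :=
        Finset.sum_congr rfl fun Q hQ => by
          rw [waveCoeff_avgSum_univ_of_le (T.le_top Q (Set.Finite.mem_toFinset _ |>.1 hQ))]
          rfl
    _ ≤ ∫ x, F x ^ 2 :=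
        sum_sq_integral_mul_le_integral_sq (fun P => P.memLp_haar 2) Tile.integral_haar_mul_self
          (fun _ _ => Tile.integral_haar_mul_haar_of_ne) (memLp_avgSum _ _ 2) _
    _ = ∑ P ∈ T.top.below, ∑ P' ∈ T.top.below, u P * u P' * P.overlap P' :=
        integral_avgSum_sq _ _
    _ ≤ ∑ P ∈ T.top.below, ∑ P' ∈ T.top.below,
          waveCoeff f P ^ 2 * waveCoeff g P' ^ 2 * P.overlap P' :=
        sum_sum_mul_mul_overlap_le _ _ _
    _ ≤ 2 * (bmoNorm M f ^ 2 * bmoNorm M g ^ 2) * T.len :=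
        sum_sum_mul_overlap_le (fun _ => sq_nonneg _) (fun _ => sq_nonneg _)
          (sum_below_sq_waveCoeff_le f) (sum_below_sq_waveCoeff_le g) _

/-- Lemma 6.3: `BMO × BMO → BMO` paraproduct estimate. -/
theorem statement12 :
    ∃ C : ℝ, 0 < C ∧
      ∀ (M : ℕ) (f g : ℝ → ℝ), IsTestFun M f → IsTestFun M g →
        bmoNorm M (paraHH M f g) ≤ C * bmoNorm M f * bmoNorm M g := by
  refine ⟨√2, by positivity, fun M f g _ _ => ?_⟩
  have hf : 0 ≤ bmoNorm M f := Real.sqrt_nonneg _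
  have hg : 0 ≤ bmoNorm M g := Real.sqrt_nonneg _
  refine Real.sqrt_le_iff.2 ⟨by positivity, maxSize_le _ _ (sq_nonneg _) fun T _ _ => ?_⟩
  rw [treeSize, div_le_iff₀ T.len_pos, mul_pow, mul_pow, Real.sq_sqrt zero_le_two]
  simpa only [_root_.mul_assoc] using sum_sq_waveCoeff_paraHH_le f g T

end Dyadic
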